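/- arXiv:1903.10701 — 5 statements merged into one kernel-verified Lean document; each statement's English description precedes it below -/
import Mathlib

section
/- For every integer n ≥ 5, the words defined by the recurrences satisfy the length identities |V_n| = n·(n−2)! − 3 and |SEQ_n| = n! − 1. -/
/-- `σ`: cyclic left shift by one position. -/
def sig (l : List ℕ) : List ℕ := l.rotate 1

/-- `τ`: transposition of the first two entries. -/
def tau : List ℕ → List ℕ
  | a :: b :: rest => b :: a :: rest
  | l => l

/-- Apply a word over the alphabet {σ,τ} (encoded: `false` = σ, `true` = τ)
letter by letter, from left to right. -/
def applyWord (w : List Bool) (l : List ℕ) : List ℕ :=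
  w.foldl (fun p c => if c then tau p else sig p) l

/-- `l` is an n-permutation: a sequence containing each of 1,…,n exactly once. -/
def IsPerm (n : ℕ) (l : List ℕ) : Prop := l.Perm (List.range' 1 n)

/-- The permutation (n, n−1, …, 1). -/
def descList (n : ℕ) : List ℕ := (List.range n).reverse.map (· + 1)

/-- Cyclic successor ⊕1 on {1,…,n−1}. -/
def osucc (n a : ℕ) : ℕ := if a = n - 1 then 1 else a + 1

/-- Cyclic predecessor ⊖1 on {1,…,n−1}. -/
def opred (n a : ℕ) : ℕ := if a = 1 then n - 1 else a - 1

/-- From a seed (a₁, a₂, …, a_{n−1}) form (a₁, a₂⊕1, a₂, …, a_{n−1}). -/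
def seedToPerm (n : ℕ) : List ℕ → List ℕ
  | a1 :: a2 :: rest => a1 :: osucc n a2 :: a2 :: rest
  | l => l

/-- ψ is a seed: an (n−1)-tuple of distinct elements of {1,…,n} with first entry n
such that (a₁, a₂⊕1, a₂, …, a_{n−1}) is an n-permutation. -/
def IsSeed (n : ℕ) (ψ : List ℕ) : Prop :=
  ψ.length = n - 1 ∧ ψ.head? = some n ∧ IsPerm n (seedToPerm n ψ)

/-- The missing element mis(ψ) = a₂⊕1. -/
def mis (n : ℕ) (ψ : List ℕ) : ℕ := osucc n (ψ.getD 1 0)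

/-- The package perms(ψ): all permutations obtained by inserting mis(ψ)
at any position of ψ and then taking any cyclic shift. -/
def perms (n : ℕ) (ψ : List ℕ) : Set (List ℕ) :=
  { π | ∃ i j, i ≤ ψ.length ∧ π = (ψ.insertIdx i (mis n ψ)).rotate j }

/-- cycle(π): the set of cyclic shifts of π. -/
def cycle (π : List ℕ) : Set (List ℕ) := { ρ | ∃ j, ρ = π.rotate j }

/-- ψ̃ = (a₁, mis(ψ), a₂, …, a_{n−1}). -/
def tildeSeed (n : ℕ) (ψ : List ℕ) : List ℕ :=
  match ψ with
  | a1 :: rest => a1 :: mis n ψ :: rest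
  | [] => []

/-- ψ^(i) (for 1 ≤ i ≤ n−1): the right cyclic shift of ψ by i−1 positions
with mis(ψ) prepended; for i = n−1 this is (x, a₂, …, a_{n−1}, a₁). -/
def seedShift (n : ℕ) (ψ : List ℕ) (i : ℕ) : List ℕ := mis n ψ :: ψ.rotate (n - i)

/-- Length of the maximal initial run a = b⊕1 in a list. -/
def decRun (n : ℕ) : List ℕ → ℕ
  | a :: b :: rest => if a = osucc n b then decRun n (b :: rest) + 1 else 1
  | [_] => 1
  | [] => 0

/-- height(ψ): the largest k with aᵢ = a_{i+1}⊕1 for all 2 ≤ i ≤ k. -/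
def height (n : ℕ) (ψ : List ℕ) : ℕ := decRun n ψ.tail

/-- The hub seed (n, b, b⊖1, …, b⊖(n−3)). -/
def hubSeed (n b : ℕ) : List ℕ := n :: (List.range (n - 2)).map (fun j => (opred n)^[j] b)

/-- Hubₙ: the set of hub seeds. -/
def Hub (n : ℕ) : Set (List ℕ) := { ψ | ∃ b, 1 ≤ b ∧ b ≤ n - 1 ∧ ψ = hubSeed n b }

/-- `IsParent n ψ β` means ψ = parent(β): ψ, β are neighboring distinct seeds,
height(ψ) > 1 and mis(ψ) = mis(β)⊕1. -/
def IsParent (n : ℕ) (par child : List ℕ) : Prop :=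
  IsSeed n par ∧ IsSeed n child ∧ par ≠ child ∧
  (perms n par ∩ perms n child).Nonempty ∧
  1 < height n par ∧ mis n par = osucc n (mis n child)

/-- `IsSon n β ψ i` means β = son(ψ, i), i.e. β is a seed with σ^i(ψ^(i)) = β̃. -/
def IsSon (n : ℕ) (child par : List ℕ) (i : ℕ) : Prop :=
  IsSeed n child ∧ sig^[i] (seedShift n par i) = tildeSeed n child

/-- γ_k = σ^k τ. -/
def gam (k : ℕ) : List Bool := List.replicate k false ++ [true]

/-- W_0 = σ and W_k = τ · ∏_{i=1}^{n−2} σ^i W_{Δ(k,i)} γ_{n−2−i},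
where Δ(k,i) = min(k−1, n−2−i). -/
def W (n : ℕ) : ℕ → List Bool
  | 0 => [false]
  | k + 1 => true :: ((List.range (n - 2)).map (fun j =>
      List.replicate (j + 1) false ++ W n (min k (n - 2 - (j + 1))) ++
        gam (n - 2 - (j + 1)))).flatten
  termination_by k => k
  decreasing_by omega

/-- V_n = γ_{n−3} · ∏_{i=2}^{n−3} σ^i W_{Δ(n−3,i)} γ_{n−2−i} · σ^{n−1}. -/
def V (n : ℕ) : List Bool :=
  gam (n - 3) ++
  ((List.range (n - 4)).map (fun j =>
    List.replicate (j + 2) false ++ W n (min (n - 4) (n - 2 - (j + 2))) ++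
      gam (n - 2 - (j + 2)))).flatten ++
  List.replicate (n - 1) false

/-- SEQ_n = γ₁^{n−2} σ² (V_n τ)^{n−2} V_n. -/
def SEQ (n : ℕ) : List Bool :=
  (List.replicate (n - 2) (gam 1)).flatten ++ List.replicate 2 false ++
  (List.replicate (n - 2) (V n ++ [true])).flatten ++ V n

/-- r: the first element after the value n in the left-to-right cyclic reading
of π with the entry p₂ skipped. -/
def rVal (n : ℕ) (π : List ℕ) : ℕ :=
  match π with
  | p1 :: _ :: rest =>
      let l := p1 :: rest
      l.getD ((l.idxOf n + 1) % l.length) 0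
  | _ => 0

/-- The Sawada–Williams successor function `next`. -/
def swNext (n : ℕ) (π : List ℕ) : List ℕ :=
  if π = descList n then sig π
  else if π.getD 1 0 ≠ n ∧ π.getD 1 0 = osucc n (rVal n π) then tau π else sig π

/-- GEN(π, α): all permutations visited (including π) when α is applied to π. -/
def GEN (α : List Bool) (π : List ℕ) : Set (List ℕ) :=
  { ρ | ∃ t, t ≤ α.length ∧ ρ = applyWord (α.take t) π }

/-- Tree(ψ): ψ together with all seeds from which ψ is reachable by parent links. -/
def SeedTree (n : ℕ) (ψ : List ℕ) : Set (List ℕ) :=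
  { β | Relation.ReflTransGen (fun x y => IsParent n y x) β ψ }

/-- bunch(ψ) = (⋃_{β ∈ Tree(ψ)} perms(β) ∖ cycle(ψ̃)) ∪ {ψ̃, ψ^(n−1)}. -/
def bunch (n : ℕ) (ψ : List ℕ) : Set (List ℕ) :=
  ((⋃ β ∈ SeedTree n ψ, perms n β) \ cycle (tildeSeed n ψ)) ∪
    {tildeSeed n ψ, seedShift n ψ (n - 1)}

/-- rank(π): the number of initial letters of SEQ_n needed to reach π from
π₀ = τ((n, n−1, …, 1)). -/
noncomputable def rank (n : ℕ) (π : List ℕ) : ℕ :=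
  sInf { t | applyWord ((SEQ n).take t) (tau (descList n)) = π }

/-- SUM(k,j) = |τ · ∏_{i=1}^{j−1} σ^i W_{Δ(k,i)} γ_{n−2−i}| + j. -/
def SUMw (n k j : ℕ) : ℕ :=
  (true :: ((List.range (j - 1)).map (fun m =>
    List.replicate (m + 1) false ++ W n (min (k - 1) (n - 2 - (m + 1))) ++
      gam (n - 2 - (m + 1)))).flatten).length + j

/-- ord(ψ): the position of the entry mis(ψ)⊕1 in ψ, counted from the right end. -/
def ord (n : ℕ) (ψ : List ℕ) : ℕ := ψ.length - ψ.idxOf (osucc n (mis n ψ))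

/-- Length of the continuation of the maximal decreasing subsequence starting
with current value `cur`. -/
def chainLen (n : ℕ) : List ℕ → ℕ → ℕ
  | [], _ => 0
  | b :: rest, cur => if cur = osucc n b then chainLen n rest b + 1 else chainLen n rest cur

/-- level(ψ) = n − m − 3, where m+1 is the length of dec_seq(ψ). -/
def level (n : ℕ) (ψ : List ℕ) : ℕ := n - chainLen n (ψ.drop 2) (ψ.getD 1 0) - 3

/-!
Each block `σ^i W_{Δ(k,i)} γ_{n−2−i}` has length `n − 1 + |W_{Δ(k,i)}|`, and `Δ(k+1,i)` runs
through `min(k, v)` for `v < n − 2`, so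
`|W_{k+1}| = 1 + (n−1)(n−2) + Σ_{v<k} |W_v| + (n−2−k) |W_k|`.
With `S(k) = Σ_{i<k} (n−3)(n−4)⋯(n−2−i)` the solution is `|W_k| = 1 + n(n−2) S(k)`: since
`(n−3−i)` times the `i`-th falling factorial is the `(i+1)`-st, the identity
`1 + Σ_{v<k} S(v) + (n−2−k) S(k) = S(k+1)` telescopes. At `k = n − 3` it gives
`Σ_{v<n−3} S(v) = (n−3)! − 1`, which turns `|V_n|` into `n (n−2)! − 3`, and finally
`|SEQ_n| + 1 = (n−1)(|V_n| + 3) = n!`.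
-/

open Finset Nat

lemma length_gam (k : ℕ) : (gam k).length = k + 1 := by simp [gam]

lemma length_flatten_map_range {α : Type*} (g : ℕ → List α) (N : ℕ) :
    ((List.range N).map g).flatten.length = ∑ j ∈ range N, (g j).length := by
  rw [List.length_flatten, List.map_map]
  rfl

lemma sum_range_comp_min {M : Type*} [AddCommMonoid M] (f : ℕ → M) {k N : ℕ} (hk : k ≤ N) :
    ∑ v ∈ range N, f (min k v) = ∑ v ∈ range k, f v + (N - k) • f k := by
  rw [range_eq_Ico, ← sum_Ico_consecutive _ (Nat.zero_le k) hk, ← range_eq_Ico]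
  congr 1
  · exact sum_congr rfl fun v hv => by rw [min_eq_right (mem_range.1 hv).le]
  · rw [sum_congr rfl fun v hv => by rw [min_eq_left (mem_Ico.1 hv).1], sum_const, Nat.card_Ico]

def descFactorialSum (m k : ℕ) : ℕ := ∑ i ∈ range k, m.descFactorial i

lemma descFactorialSum_succ (m k : ℕ) :
    descFactorialSum m (k + 1) = descFactorialSum m k + m.descFactorial k :=
  sum_range_succ _ _

lemma one_add_sum_descFactorialSum {m k : ℕ} (hk : k ≤ m + 1) :
    1 + ∑ v ∈ range k, descFactorialSum m v + (m + 1 - k) * descFactorialSum m k =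
      descFactorialSum m (k + 1) := by
  induction k with
  | zero => simp [descFactorialSum]
  | succ k ih =>
    obtain ⟨c, rfl⟩ : ∃ c, m = k + c := ⟨m - k, by omega⟩
    have ih := ih (by omega)
    simp only [show k + c + 1 - k = c + 1 by omega, show k + c + 1 - (k + 1) = c by omega,
      show k + c - k = c by omega, sum_range_succ, descFactorialSum_succ, descFactorial_succ] at ih ⊢
    linear_combination ih

lemma sum_range_descFactorialSum_add_one (m : ℕ) :
    ∑ v ∈ range m, descFactorialSum m v + 1 = m ! := by
  have h := one_add_sum_descFactorialSum (m := m) (k := m) (by omega)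
  rw [descFactorialSum_succ, Nat.descFactorial_self, Nat.add_sub_cancel_left, one_mul] at h
  omega

lemma length_W_succ (n k : ℕ) :
    (W n (k + 1)).length = 1 + (n - 2) * (n - 1) + ∑ v ∈ range (n - 2), (W n (min k v)).length := by
  rw [W, List.length_cons, length_flatten_map_range]
  have hterm : ∀ j ∈ range (n - 2),
      (List.replicate (j + 1) false ++ W n (min k (n - 2 - (j + 1))) ++
        gam (n - 2 - (j + 1))).length = (n - 1) + (W n (min k (n - 2 - 1 - j))).length := by
    intro j hj
    have := mem_range.1 hj
    simp only [List.length_append, List.length_replicate, length_gam]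
    rw [show n - 2 - (j + 1) = n - 2 - 1 - j by omega]
    omega
  rw [sum_congr rfl hterm, sum_add_distrib, sum_const, card_range, smul_eq_mul,
    sum_range_reflect (fun v => (W n (min k v)).length)]
  ring

lemma length_W {n k : ℕ} (hk : k ≤ n - 2) :
    (W n k).length = 1 + n * (n - 2) * descFactorialSum (n - 3) k := by
  induction k using Nat.strong_induction_on with
  | _ k ih =>
    match k with
    | 0 => simp [W, descFactorialSum]
    | k + 1 =>
      rw [length_W_succ, sum_range_comp_min (fun v => (W n v).length) (by omega : k ≤ n - 2),
        sum_congr rfl fun v hv => ih v (by rw [mem_range] at hv; omega)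
          (by rw [mem_range] at hv; omega),
        ih k (by omega) (by omega), sum_add_distrib, sum_const, card_range, ← mul_sum,
        ← one_add_sum_descFactorialSum (by omega : k ≤ n - 3 + 1),
        show n - 3 + 1 - k = n - 2 - k by omega, smul_eq_mul, smul_eq_mul]
      obtain ⟨c, rfl⟩ : ∃ c, n = k + c + 3 := ⟨n - 2 - (k + 1), by omega⟩
      simp only [show k + c + 3 - 2 = k + c + 1 by omega, show k + c + 1 - k = c + 1 by omega,
        show k + c + 3 - 1 = k + c + 2 by omega]
      ring

lemma length_V_eq (n : ℕ) :
    (V n).length =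
      (n - 3 + 1) + ((n - 4) * (n - 1) + ∑ v ∈ range (n - 4), (W n (v + 1)).length) + (n - 1) := by
  have hterm : ∀ j ∈ range (n - 4),
      (List.replicate (j + 2) false ++ W n (min (n - 4) (n - 2 - (j + 2))) ++
        gam (n - 2 - (j + 2))).length = (n - 1) + (W n (n - 4 - 1 - j + 1)).length := by
    intro j hj
    have := mem_range.1 hj
    simp only [List.length_append, List.length_replicate, length_gam]
    rw [show min (n - 4) (n - 2 - (j + 2)) = n - 4 - 1 - j + 1 by omega]
    omega
  rw [V, List.length_append, List.length_append, length_gam, length_flatten_map_range,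
    sum_congr rfl hterm, sum_add_distrib, sum_const, card_range, smul_eq_mul,
    sum_range_reflect (fun v => (W n (v + 1)).length), List.length_replicate]

lemma length_V_add_three {n : ℕ} (hn : 4 ≤ n) : (V n).length + 3 = n * (n - 2)! := by
  have hS : ∑ v ∈ range (n - 4), descFactorialSum (n - 3) (v + 1) + 1 = (n - 3)! := by
    have h := sum_range_succ' (descFactorialSum (n - 3)) (n - 4)
    rw [show n - 4 + 1 = n - 3 by omega] at h
    rw [← sum_range_descFactorialSum_add_one, h]
    rfl
  rw [length_V_eq, sum_congr rfl fun v hv => length_W (by rw [mem_range] at hv; omega),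
    sum_add_distrib, sum_const, card_range, smul_eq_mul, mul_one, ← mul_sum]
  obtain ⟨m, rfl⟩ : ∃ m, n = m + 4 := ⟨n - 4, by omega⟩
  simp only [show m + 4 - 2 = m + 2 by omega, show m + 4 - 3 = m + 1 by omega,
    show m + 4 - 4 = m by omega, show m + 4 - 1 = m + 3 by omega] at hS ⊢
  rw [factorial_succ (m + 1), ← hS]
  ring

lemma length_SEQ_add_one {n : ℕ} (hn : 2 ≤ n) :
    (SEQ n).length + 1 = (n - 1) * ((V n).length + 3) := by
  obtain ⟨m, rfl⟩ : ∃ m, n = m + 2 := ⟨n - 2, by omega⟩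
  simp only [SEQ, List.length_append, List.length_flatten, List.map_replicate, List.sum_replicate,
    length_gam, List.length_replicate, List.length_cons, List.length_nil, smul_eq_mul,
    Nat.add_sub_cancel, show m + 2 - 1 = m + 1 by omega]
  ring

/-- |V_n| = n·(n−2)! − 3 and |SEQ_n| = n! − 1. -/
theorem length_V_and_SEQ (n : ℕ) (hn : 5 ≤ n) :
    (V n).length = n * Nat.factorial (n - 2) - 3 ∧
    (SEQ n).length = Nat.factorial n - 1 := by
  have hV := length_V_add_three (by omega : 4 ≤ n)
  have hSEQ := length_SEQ_add_one (by omega : 2 ≤ n)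
  have hfac : (n - 1) * (n * (n - 2)!) = n ! := by
    rw [mul_left_comm, ← show n - 1 - 1 = n - 2 by omega, mul_factorial_pred (by omega),
      mul_factorial_pred (by omega)]
  rw [hV, hfac] at hSEQ
  omega
end

section
/- For every integer n ≥ 4 and every n-permutation π, the number of seeds ψ such that π ∈ perms(ψ) is either 1 or 2. -/
/-!
If `π ∈ perms ψ`, rotating `π` to start with `n` gives `ν = (n, y, …)`, and `ψ` is `ν` with
`mis ψ` erased: the rotation undoes the cyclic shift because the entries are distinct, and the
erasure undoes the insertion. Either `mis ψ = y`, or `y` is still the second entry of `ψ` and then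
`mis ψ = y ⊕ 1`. So `ψ` is `ν` with `y` or with `y ⊕ 1` erased, and the latter is always a seed
whose package contains `π`.
-/

theorem Set.ncard_eq_one_or_two_of_subset_pair {α : Type*} {s : Set α} {a b : α} (ha : a ∈ s)
    (hs : s ⊆ {a, b}) : s.ncard = 1 ∨ s.ncard = 2 := by
  have hpos : 0 < s.ncard := (Set.ncard_pos ((Set.toFinite {a, b}).subset hs)).mpr ⟨a, ha⟩
  have hle : s.ncard ≤ 2 :=
    (Set.ncard_le_ncard hs).trans ((Set.ncard_insert_le a {b}).trans (by simp))
  omega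

namespace List

variable {α : Type*}

theorem Nodup.rotate_eq_rotate_of_head?_eq {l : List α} (hl : l.Nodup) {i j : ℕ}
    (h : (l.rotate i).head? = (l.rotate j).head?) : l.rotate i = l.rotate j := by
  rcases eq_or_ne l [] with rfl | hne
  · simp
  have hpos : 0 < l.length := length_pos_iff.mpr hne
  rw [← rotate_mod l i, ← rotate_mod l j] at h ⊢
  simp only [head?_rotate (Nat.mod_lt _ hpos), getElem?_eq_getElem (Nat.mod_lt _ hpos),
    Option.some_inj, hl.getElem_inj_iff] at h
  rw [h]

variable [DecidableEq α]

def rotateTo (l : List α) (a : α) : List α := l.rotate (l.idxOf a)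

theorem isRotated_rotateTo (l : List α) (a : α) : l ~r l.rotateTo a := ⟨_, rfl⟩

theorem head?_rotateTo {l : List α} {a : α} (ha : a ∈ l) : (l.rotateTo a).head? = some a := by
  rw [rotateTo, head?_rotate (idxOf_lt_length_iff.mpr ha), getElem?_idxOf ha]

theorem Nodup.rotateTo_rotate {l : List α} (hl : l.Nodup) {a : α} (ha : a ∈ l) (k : ℕ) :
    (l.rotate k).rotateTo a = l.rotateTo a := by
  rw [rotateTo, rotate_rotate]
  apply hl.rotate_eq_rotate_of_head?_eq
  rw [← rotate_rotate, ← rotateTo, ← rotateTo, head?_rotateTo (mem_rotate.mpr ha),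
    head?_rotateTo ha]

theorem erase_insertIdx_of_not_mem {x : α} : ∀ {l : List α}, x ∉ l → ∀ i : ℕ,
    (l.insertIdx i x).erase x = l
  | _, _, 0 => by rw [insertIdx_zero, erase_cons_head]
  | [], _, _ + 1 => by simp
  | a :: t, hx, i + 1 => by
    have hax : a ≠ x := fun h => hx (h ▸ mem_cons_self)
    rw [insertIdx_succ_cons, erase_cons_tail (by simpa using hax),
      erase_insertIdx_of_not_mem (fun h => hx (mem_cons_of_mem a h))]

theorem insertIdx_idxOf_erase {x : α} {l : List α} (hx : x ∈ l) :
    (l.erase x).insertIdx (l.idxOf x) x = l := by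
  have hlt := idxOf_lt_length_iff.mpr hx
  simpa [getElem_idxOf] using insertIdx_eraseIdx_getElem hlt

theorem erase_rotateTo_insertIdx {x a : α} {t : List α} (hx : x ∉ a :: t) (i : ℕ) :
    (((a :: t).insertIdx i x).rotateTo a).erase x = a :: t := by
  have hxa : x ≠ a := fun h => hx (h ▸ mem_cons_self)
  cases i with
  | zero =>
    rw [insertIdx_zero, rotateTo, idxOf_cons_ne _ hxa, idxOf_cons_self, rotate_cons_succ,
      rotate_zero, erase_append_right _ hx, erase_cons_head, append_nil]
  | succ i =>
    rw [rotateTo, insertIdx_succ_cons, idxOf_cons_self, rotate_zero, ← insertIdx_succ_cons,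
      erase_insertIdx_of_not_mem hx]

end List

open List

theorem one_le_osucc (n a : ℕ) : 1 ≤ osucc n a := by
  unfold osucc; split_ifs <;> omega

theorem osucc_lt {n a : ℕ} (hn : 2 ≤ n) (ha : a < n) : osucc n a < n := by
  unfold osucc; split_ifs <;> omega

theorem osucc_ne_self {n : ℕ} (hn : 3 ≤ n) (a : ℕ) : osucc n a ≠ a := by
  unfold osucc; split_ifs <;> omega

theorem IsPerm.nodup {n : ℕ} {l : List ℕ} (h : IsPerm n l) : l.Nodup :=
  h.nodup_iff.mpr nodup_range'

theorem IsPerm.rotate {n : ℕ} {l : List ℕ} (h : IsPerm n l) (k : ℕ) : IsPerm n (l.rotate k) :=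
  (rotate_perm l k).trans h

theorem IsPerm.rotateTo_eq_cons {n : ℕ} {π : List ℕ} (hπ : IsPerm n π) (hn : 2 ≤ n) :
    ∃ y rest, π.rotateTo n = n :: y :: rest := by
  have hnπ : n ∈ π := hπ.mem_iff.mpr (mem_range'_1.mpr ⟨by omega, by omega⟩)
  obtain ⟨t, ht⟩ := head?_eq_some_iff.mp (head?_rotateTo hnπ)
  have hlen : (n :: t).length = n := by
    rw [← ht, rotateTo, (hπ.rotate _).length_eq, length_range']
  obtain ⟨y, rest, rfl⟩ := exists_cons_of_length_pos (by simp at hlen; omega : 0 < t.length)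
  exact ⟨y, rest, ht⟩

theorem osucc_mem_of_isPerm {n y : ℕ} {rest : List ℕ} (hn : 3 ≤ n)
    (hν : IsPerm n (n :: y :: rest)) : osucc n y ∈ rest := by
  have hyn : y ≠ n := fun e => (nodup_cons.mp hν.nodup).1 (e ▸ mem_cons_self)
  have hy : y < 1 + n := (mem_range'_1.mp (hν.mem_iff.mp (mem_cons_of_mem _ mem_cons_self))).2
  have hlt : osucc n y < n := osucc_lt (by omega) (by omega)
  have hx : osucc n y ∈ n :: y :: rest :=
    hν.mem_iff.mpr (mem_range'_1.mpr ⟨one_le_osucc n y, by omega⟩)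
  exact (mem_cons.mp ((mem_cons.mp hx).resolve_left hlt.ne)).resolve_left (osucc_ne_self hn y)

theorem erase_osucc_eq_cons {n y : ℕ} {rest : List ℕ} (hn : 3 ≤ n)
    (hν : IsPerm n (n :: y :: rest)) :
    (n :: y :: rest).erase (osucc n y) = n :: y :: rest.erase (osucc n y) := by
  have hnx : n ≠ osucc n y :=
    fun e => (nodup_cons.mp hν.nodup).1 (e ▸ mem_cons_of_mem _ (osucc_mem_of_isPerm hn hν))
  rw [erase_cons_tail (by simpa using hnx),
    erase_cons_tail (by simpa using (osucc_ne_self hn y).symm)]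

theorem isSeed_erase_osucc {n y : ℕ} {rest : List ℕ} (hn : 3 ≤ n)
    (hν : IsPerm n (n :: y :: rest)) : IsSeed n ((n :: y :: rest).erase (osucc n y)) := by
  have hx := osucc_mem_of_isPerm hn hν
  rw [erase_osucc_eq_cons hn hν]
  refine ⟨?_, rfl, ?_⟩
  · have hlen := hν.length_eq
    have hpos := length_pos_of_mem hx
    simp only [length_cons, length_range'] at hlen
    simp only [length_cons, length_erase_of_mem hx]
    omega
  · show (n :: osucc n y :: y :: rest.erase (osucc n y)).Perm (range' 1 n)
    exact (((Perm.swap _ _ _).trans ((perm_cons_erase hx).symm.cons y)).cons n).trans hν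

theorem mem_perms_erase_osucc {n y : ℕ} {π rest : List ℕ} (hn : 3 ≤ n)
    (hν : IsPerm n (n :: y :: rest)) (hπ : π ~r n :: y :: rest) :
    π ∈ perms n ((n :: y :: rest).erase (osucc n y)) := by
  have hx : osucc n y ∈ n :: y :: rest :=
    mem_cons_of_mem _ (mem_cons_of_mem _ (osucc_mem_of_isPerm hn hν))
  have hmis : mis n ((n :: y :: rest).erase (osucc n y)) = osucc n y := by
    rw [erase_osucc_eq_cons hn hν]; rfl
  obtain ⟨j, hj⟩ := hπ.symm
  refine ⟨(n :: y :: rest).idxOf (osucc n y), j, ?_, ?_⟩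
  · rw [length_erase_of_mem hx]
    have := idxOf_lt_length_iff.mpr hx
    omega
  · rw [hmis, insertIdx_idxOf_erase hx, hj]

theorem IsSeed.mis_not_mem {n : ℕ} {ψ : List ℕ} (hψ : IsSeed n ψ) (hn : 3 ≤ n) :
    mis n ψ ∉ ψ := by
  obtain ⟨hlen, hhead, hperm⟩ := hψ
  obtain ⟨_ | ⟨a, t⟩, rfl⟩ := head?_eq_some_iff.mp hhead
  · simp at hlen; omega
  have hnd : (n :: mis n (n :: a :: t) :: a :: t).Nodup := hperm.nodup
  exact (nodup_cons.mp ((Perm.swap _ n _).nodup_iff.mp hnd)).1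

theorem IsSeed.eq_erase_mis_of_mem_perms {n : ℕ} {ψ π : List ℕ} (hψ : IsSeed n ψ) (hn : 3 ≤ n)
    (hπ : π.Nodup) (h : π ∈ perms n ψ) : ψ = (π.rotateTo n).erase (mis n ψ) := by
  obtain ⟨i, j, hi, rfl⟩ := h
  obtain ⟨t, ht⟩ := head?_eq_some_iff.mp hψ.2.1
  have hnL : n ∈ ψ.insertIdx i (mis n ψ) :=
    (perm_insertIdx _ _ hi).mem_iff.mpr (mem_cons_of_mem _ (ht ▸ mem_cons_self))
  rw [(nodup_rotate.mp hπ).rotateTo_rotate hnL]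
  conv_rhs => rw [ht]
  rwa [erase_rotateTo_insertIdx (ht ▸ hψ.mis_not_mem hn)]

theorem IsSeed.eq_erase_or_eq_erase_osucc {n y : ℕ} {ψ π rest : List ℕ} (hψ : IsSeed n ψ)
    (hn : 3 ≤ n) (hπ : π.Nodup) (h : π ∈ perms n ψ) (hν : π.rotateTo n = n :: y :: rest) :
    ψ = (n :: y :: rest).erase y ∨ ψ = (n :: y :: rest).erase (osucc n y) := by
  have he := hψ.eq_erase_mis_of_mem_perms hn hπ h
  rw [hν] at he
  by_cases hy : mis n ψ = y
  · exact .inl (hy ▸ he)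
  right
  have hnm : n ≠ mis n ψ := by
    obtain ⟨t, ht⟩ := head?_eq_some_iff.mp hψ.2.1
    exact ne_of_mem_of_not_mem (ht ▸ mem_cons_self) (hψ.mis_not_mem hn)
  have hψ_cons : ψ = n :: y :: rest.erase (mis n ψ) := by
    rwa [erase_cons_tail (by simpa using hnm), erase_cons_tail (by simpa using Ne.symm hy)] at he
  have hmis : mis n ψ = osucc n y := by rw [mis, hψ_cons]; rfl
  rwa [← hmis]

/-- every n-permutation belongs to exactly one or two packages. -/
theorem package_count_one_or_two (n : ℕ) (hn : 4 ≤ n) (π : List ℕ) (hπ : IsPerm n π) :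
    {ψ : List ℕ | IsSeed n ψ ∧ π ∈ perms n ψ}.ncard = 1 ∨
    {ψ : List ℕ | IsSeed n ψ ∧ π ∈ perms n ψ}.ncard = 2 := by
  obtain ⟨y, rest, hrot⟩ := hπ.rotateTo_eq_cons (by omega)
  have hν : IsPerm n (n :: y :: rest) := hrot ▸ hπ.rotate (π.idxOf n)
  apply Set.ncard_eq_one_or_two_of_subset_pair
    (a := (n :: y :: rest).erase (osucc n y)) (b := (n :: y :: rest).erase y)
  · exact ⟨isSeed_erase_osucc (by omega) hν,
      mem_perms_erase_osucc (by omega) hν (hrot ▸ π.isRotated_rotateTo n)⟩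
  · rintro ψ ⟨hψ, hπψ⟩
    rcases hψ.eq_erase_or_eq_erase_osucc (by omega) hπ.nodup hπψ hrot with h | h <;> simp [h]
end

section
/- For every integer n ≥ 5 and distinct seeds φ, ψ whose packages intersect (perms(φ) ∩ perms(ψ) ≠ ∅), exactly one of φ = parent(ψ) or ψ = parent(φ) holds; moreover, if φ = parent(ψ) then ψ = son(φ, i) for some i with 1 ≤ i ≤ n−3. -/
/-!
Rotate a permutation common to both packages so that it starts with `n`. The result
`L = (n, q, …)` is `φ` with `mis φ` inserted after its first entry, and likewise for `ψ`. A seed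
whose missing element sits right after `n` in `L` has missing element `q`; otherwise its second
entry is `q` and its missing element is `q ⊕ 1`. Distinct seeds have distinct missing elements, so
one of them, say `ψ`, satisfies `ψ̃ = L`, and the other is `L` with `q ⊕ 1` removed, so it starts
with `n, q, q ⊖ 1`. This gives `height φ > 1` and `mis φ = mis ψ ⊕ 1`, and rotating `φ^(i)` by
`i = n - m`, where `m ≥ 3` is the position of `q ⊕ 1` in `L`, gives back `L = ψ̃`. The parent
relation is asymmetric because `⊕ 1` has no cycle of length two on `{1, …, n - 1}` once `n ≥ 4`.
-/

namespace List

variable {α : Type*}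

theorem insertIdx_eq_take_append_cons_drop (x : α) :
    ∀ {l : List α} {m : ℕ}, m ≤ l.length → l.insertIdx m x = l.take m ++ x :: l.drop m
  | _, 0, _ => by simp
  | a :: l, m + 1, h => by
    simp [insertIdx_succ_cons, insertIdx_eq_take_append_cons_drop x (l := l) (by simpa using h)]

theorem erase_insertIdx [DecidableEq α] {x : α} :
    ∀ {l : List α}, x ∉ l → ∀ i, (l.insertIdx i x).erase x = l
  | [], _, 0 | [], _, _ + 1 => by simp
  | _ :: _, _, 0 => by simp
  | a :: l, hx, i + 1 => by
    rw [mem_cons, not_or] at hx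
    rw [insertIdx_succ_cons, erase_cons_tail (by simpa using Ne.symm hx.1), erase_insertIdx hx.2]

theorem rotate_cons_rotate_length_add_one_sub (x : α) {l : List α} {m : ℕ}
    (h : m ≤ l.length) :
    (x :: l.rotate m).rotate (l.length + 1 - m) = l.insertIdx m x := by
  rw [rotate_eq_drop_append_take h, ← cons_append,
    rotate_eq_drop_append_take (by simp; omega)]
  have hlen : l.length + 1 - m = (x :: l.drop m).length := by simp; omega
  rw [hlen, drop_left, take_left, insertIdx_eq_take_append_cons_drop x h]

theorem Nodup.eq_of_cons_isRotated_cons {a : α} {l l' : List α} (hl : (a :: l).Nodup)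
    (h : a :: l ~r a :: l') : l = l' := by
  obtain ⟨k, hk⟩ := h
  have hlt : k % (a :: l).length < (a :: l).length := Nat.mod_lt _ (by simp)
  have hhead := congr_arg head? hk
  rw [← rotate_mod, head?_rotate hlt, head?_cons, getElem?_eq_getElem hlt,
    Option.some_inj] at hhead
  have hk0 : k % (a :: l).length = 0 :=
    (hl.getElem_inj_iff (hj := by simp)).1 (hhead.trans (getElem_cons_zero ..).symm)
  rw [← rotate_mod, hk0, rotate_zero] at hk
  exact (cons.inj hk).2

end List

theorem osucc_osucc_ne {n : ℕ} (hn : 4 ≤ n) (a : ℕ) :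
    osucc n (osucc n a) ≠ a := by
  unfold osucc; split_ifs <;> omega

theorem sig_iterate (l : List ℕ) (i : ℕ) : sig^[i] l = l.rotate i := by
  induction i generalizing l with
  | zero => rw [Function.iterate_zero_apply, List.rotate_zero]
  | succ i ih => rw [Function.iterate_succ_apply, ih, sig, List.rotate_rotate, Nat.add_comm]

theorem tildeSeed_eq_insertIdx (n : ℕ) (ψ : List ℕ) :
    tildeSeed n ψ = ψ.insertIdx 1 (mis n ψ) := by
  cases ψ <;> rfl

theorem decRun_cons_pos (n a : ℕ) (s : List ℕ) : 0 < decRun n (a :: s) := by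
  cases s with
  | nil => simp [decRun]
  | cons b s => rw [decRun]; split_ifs <;> omega

namespace IsSeed

variable {n : ℕ} {φ ψ : List ℕ}

theorem exists_eq_cons_cons (hn : 3 ≤ n) (hψ : IsSeed n ψ) : ∃ a t, ψ = n :: a :: t :=
  match ψ, hψ.2.1, hψ.1 with
  | _ :: a :: t, hhead, _ => ⟨a, t, by rw [Option.some.inj hhead]⟩
  | [_], _, hlen | [], _, hlen => by simp at hlen; omega

theorem ne_nil (hψ : IsSeed n ψ) : ψ ≠ [] := by
  rintro rfl
  simp [IsSeed] at hψ

theorem length_add_one (hψ : IsSeed n ψ) : ψ.length + 1 = n := by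
  have := List.length_pos_iff.2 hψ.ne_nil
  have := hψ.1
  omega

theorem nodup_mis_cons (hn : 3 ≤ n) (hψ : IsSeed n ψ) : (mis n ψ :: ψ).Nodup := by
  obtain ⟨a, t, rfl⟩ := hψ.exists_eq_cons_cons hn
  exact ((List.Perm.swap _ _ _).trans hψ.2.2).nodup_iff.2 List.nodup_range'

theorem exists_isRotated_insertIdx {π : List ℕ} (hψ : IsSeed n ψ) (hπ : π ∈ perms n ψ) :
    ∃ m, 1 ≤ m ∧ m ≤ ψ.length ∧ π ~r ψ.insertIdx m (mis n ψ) := by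
  obtain ⟨i, j, hi, rfl⟩ := hπ
  rcases i with _ | i
  · refine ⟨ψ.length, ?_, le_rfl, ?_⟩
    · exact List.length_pos_iff.2 hψ.ne_nil
    · rw [List.insertIdx_length_self]
      exact (List.IsRotated.forall _ j).trans (List.isRotated_concat _ _).symm
  · exact ⟨i + 1, by omega, hi, List.IsRotated.forall _ j⟩

theorem insertIdx_eq_of_isRotated (hn : 3 ≤ n) (hφ : IsSeed n φ) (hψ : IsSeed n ψ)
    {m₁ m₂ : ℕ} (hm₁ : 1 ≤ m₁) (hm₂ : 1 ≤ m₂) (hm₁φ : m₁ ≤ φ.length)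
    (h : φ.insertIdx m₁ (mis n φ) ~r ψ.insertIdx m₂ (mis n ψ)) :
    φ.insertIdx m₁ (mis n φ) = ψ.insertIdx m₂ (mis n ψ) := by
  have hnd := (List.perm_insertIdx _ _ hm₁φ).nodup_iff.2 (hφ.nodup_mis_cons hn)
  obtain ⟨a, s, rfl⟩ := hφ.exists_eq_cons_cons hn
  obtain ⟨b, t, rfl⟩ := hψ.exists_eq_cons_cons hn
  obtain ⟨k₁, rfl⟩ : ∃ k, m₁ = k + 1 := ⟨m₁ - 1, by omega⟩
  obtain ⟨k₂, rfl⟩ : ∃ k, m₂ = k + 1 := ⟨m₂ - 1, by omega⟩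
  simp only [List.insertIdx_succ_cons] at hnd h ⊢
  rw [hnd.eq_of_cons_isRotated_cons h]

theorem eq_of_insertIdx_eq (hn : 3 ≤ n) (hφ : IsSeed n φ) (hψ : IsSeed n ψ)
    {m₁ m₂ : ℕ} (hm₁ : 1 ≤ m₁) (hm₂ : 1 ≤ m₂) (hm : m₁ = 1 ↔ m₂ = 1)
    (h : φ.insertIdx m₁ (mis n φ) = ψ.insertIdx m₂ (mis n ψ)) : φ = ψ := by
  have hmis : mis n φ = mis n ψ := by
    obtain ⟨a, s, rfl⟩ := hφ.exists_eq_cons_cons hn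
    obtain ⟨b, t, rfl⟩ := hψ.exists_eq_cons_cons hn
    rcases eq_or_ne m₁ 1 with rfl | h₁
    · rw [hm.1 rfl] at h
      simp only [List.insertIdx_succ_cons, List.insertIdx_zero, List.cons.injEq] at h
      exact h.2.1
    · obtain ⟨k₁, rfl⟩ : ∃ k, m₁ = k + 2 := ⟨m₁ - 2, by omega⟩
      obtain ⟨k₂, rfl⟩ : ∃ k, m₂ = k + 2 := ⟨m₂ - 2, by omega⟩
      simp only [List.insertIdx_succ_cons, List.cons.injEq] at h
      simp only [mis, List.getD_cons_succ, List.getD_cons_zero, h.2.1]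
  rw [← List.erase_insertIdx (List.nodup_cons.1 (hφ.nodup_mis_cons hn)).1 m₁, h, hmis,
    List.erase_insertIdx ((List.nodup_cons.1 (hψ.nodup_mis_cons hn)).1) m₂]

theorem exists_eq_of_insertIdx_eq_tildeSeed (hn : 4 ≤ n) (hφ : IsSeed n φ) (hψ : IsSeed n ψ)
    {m : ℕ} (hm : 2 ≤ m) (h : φ.insertIdx m (mis n φ) = tildeSeed n ψ) :
    3 ≤ m ∧ ∃ a s t, ψ = n :: a :: t ∧ φ = n :: osucc n a :: a :: s := by
  obtain ⟨a, t, rfl⟩ := hψ.exists_eq_cons_cons (by omega)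
  obtain ⟨b, s, rfl⟩ := hφ.exists_eq_cons_cons (by omega)
  obtain ⟨k, rfl⟩ : ∃ k, m = k + 2 := ⟨m - 2, by omega⟩
  simp only [tildeSeed, List.insertIdx_succ_cons, List.cons.injEq, true_and] at h
  obtain ⟨rfl, hs⟩ := h
  match k, s, hs with
  -- `m = 2` would put `mis φ = a ⊕ 1 ⊕ 1` where `ψ̃` has `a`
  | 0, _, hs => exact absurd (List.cons.inj hs).1 (osucc_osucc_ne hn a)
  | _ + 1, [], hs => simp at hs
  | _ + 1, c :: s, hs =>
    rw [List.insertIdx_succ_cons, List.cons.injEq] at hs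
    exact ⟨by omega, a, s, t, rfl, by rw [hs.1]; rfl⟩

theorem isSon_of_insertIdx_eq_tildeSeed (hφ : IsSeed n φ) (hψ : IsSeed n ψ) {m : ℕ}
    (hm : m ≤ φ.length) (h : φ.insertIdx m (mis n φ) = tildeSeed n ψ) :
    IsSon n ψ φ (n - m) := by
  have hlen := hφ.length_add_one
  refine ⟨hψ, ?_⟩
  rw [seedShift, sig_iterate, Nat.sub_sub_self (by omega),
    show n - m = φ.length + 1 - m by omega, List.rotate_cons_rotate_length_add_one_sub _ hm, h]

theorem isParent_and_isSon_of_insertIdx_eq_tildeSeed (hn : 4 ≤ n) (hφ : IsSeed n φ)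
    (hψ : IsSeed n ψ) (hne : φ ≠ ψ) (hint : (perms n φ ∩ perms n ψ).Nonempty) {m : ℕ} (hm : 2 ≤ m)
    (hmφ : m ≤ φ.length) (h : φ.insertIdx m (mis n φ) = tildeSeed n ψ) :
    IsParent n φ ψ ∧ ∃ i, 1 ≤ i ∧ i ≤ n - 3 ∧ IsSon n ψ φ i := by
  have hson := isSon_of_insertIdx_eq_tildeSeed hφ hψ hmφ h
  have hlen := hφ.length_add_one
  obtain ⟨hm₃, a, s, t, rfl, rfl⟩ := hφ.exists_eq_of_insertIdx_eq_tildeSeed hn hψ hm h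
  have hheight : 1 < height n (n :: osucc n a :: a :: s) := by
    rw [height, List.tail_cons, decRun, if_pos rfl, Nat.lt_add_left_iff_pos]
    exact decRun_cons_pos n a s
  exact ⟨⟨hφ, hψ, hne, hint, hheight, rfl⟩, n - m, by omega, by omega, hson⟩

end IsSeed

theorem IsParent.asymm {n : ℕ} {φ ψ : List ℕ} (hn : 4 ≤ n) (h : IsParent n φ ψ) :
    ¬ IsParent n ψ φ :=
  fun h' => osucc_osucc_ne hn (mis n φ) (by rw [← h'.2.2.2.2.2, ← h.2.2.2.2.2])

/-- for distinct seeds with intersecting packages, exactly one of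
φ = parent(ψ) or ψ = parent(φ) holds, and if φ = parent(ψ) then ψ = son(φ, i)
for some 1 ≤ i ≤ n−3. -/
theorem neighbors_parent_son (n : ℕ) (hn : 5 ≤ n) (φ ψ : List ℕ)
    (hφ : IsSeed n φ) (hψ : IsSeed n ψ) (hne : φ ≠ ψ)
    (hint : (perms n φ ∩ perms n ψ).Nonempty) :
    Xor' (IsParent n φ ψ) (IsParent n ψ φ) ∧
    (IsParent n φ ψ → ∃ i, 1 ≤ i ∧ i ≤ n - 3 ∧ IsSon n ψ φ i) := by
  obtain ⟨π, hπφ, hπψ⟩ := id hint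
  obtain ⟨m₁, hm₁, hm₁φ, hπ₁⟩ := hφ.exists_isRotated_insertIdx hπφ
  obtain ⟨m₂, hm₂, hm₂ψ, hπ₂⟩ := hψ.exists_isRotated_insertIdx hπψ
  have hL := hφ.insertIdx_eq_of_isRotated (by omega) hψ hm₁ hm₂ hm₁φ (hπ₁.symm.trans hπ₂)
  have hcases :
      (IsParent n φ ψ ∧ ∃ i, 1 ≤ i ∧ i ≤ n - 3 ∧ IsSon n ψ φ i) ∨ IsParent n ψ φ := by
    by_cases hm : m₁ = 1 ↔ m₂ = 1
    · exact absurd (hφ.eq_of_insertIdx_eq (by omega) hψ hm₁ hm₂ hm hL) hne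
    rcases eq_or_ne m₂ 1 with rfl | hm₂₁
    · rw [← tildeSeed_eq_insertIdx] at hL
      exact .inl (hφ.isParent_and_isSon_of_insertIdx_eq_tildeSeed (by omega) hψ hne hint
        (by omega) hm₁φ hL)
    · obtain rfl : m₁ = 1 := by tauto
      rw [← tildeSeed_eq_insertIdx] at hL
      exact .inr (hψ.isParent_and_isSon_of_insertIdx_eq_tildeSeed (by omega) hφ hne.symm
        (Set.inter_comm _ _ ▸ hint) (by omega) hm₂ψ hL.symm).1
  rcases hcases with ⟨hpar, hson⟩ | hpar
  · exact ⟨.inl ⟨hpar, hpar.asymm (by omega)⟩, fun _ => hson⟩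
  · exact ⟨.inr ⟨hpar, hpar.asymm (by omega)⟩,
      fun h => absurd hpar (h.asymm (by omega))⟩
end

section
/- For every integer n ≥ 4, every seed ψ and every i with 0 < i < n−1, applying the word γ_{n−1} = σ^{n−1} τ to the permutation ψ^(i) yields ψ^(i+1). -/
/-! Applying `σ^{n-1}` to a list of length `n` rotates it right by one place, so `γ_{n-1}`
moves the last entry of `ψ^(i) = x :: L` to the second position and keeps `x` in front:
the result is `x` followed by the right rotation of `L`, which is `ψ^(i+1)`. -/

lemma applyWord_append (w w' : List Bool) (l : List ℕ) :
    applyWord (w ++ w') l = applyWord w' (applyWord w l) :=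
  List.foldl_append

lemma applyWord_replicate_false (k : ℕ) (l : List ℕ) :
    applyWord (List.replicate k false) l = l.rotate k := by
  induction k generalizing l with
  | zero => simp [applyWord]
  | succ k ih =>
    rw [List.replicate_succ, ← List.singleton_append, applyWord_append, ih]
    simp only [applyWord, List.foldl_cons, List.foldl_nil, Bool.false_eq_true, if_false, sig,
      List.rotate_rotate, Nat.add_comm]

lemma applyWord_gam (k : ℕ) (l : List ℕ) : applyWord (gam k) l = tau (l.rotate k) := by
  rw [gam, applyWord_append, applyWord_replicate_false]
  rfl

lemma tau_rotate_length_cons (x : ℕ) (L : List ℕ) :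
    tau ((x :: L).rotate L.length) = x :: L.rotate (L.length - 1) := by
  rcases L.eq_nil_or_concat with rfl | ⟨L', a, rfl⟩
  · rfl
  · rw [List.concat_eq_append, List.length_append, List.length_singleton, Nat.add_sub_cancel,
      List.rotate_append_length_eq, ← List.cons_append]
    exact congrArg tau (List.rotate_append_length_eq (x :: L') [a])

theorem gamma_shifts_seed_general (n : ℕ) (ψ : List ℕ) (hψ : IsSeed n ψ)
    (i : ℕ) (h2 : i < n - 1) :
    applyWord (gam (n - 1)) (seedShift n ψ i) = seedShift n ψ (i + 1) := by
  obtain ⟨hlen, -, -⟩ := hψ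
  have hL : (ψ.rotate (n - i)).length = n - 1 := by rw [List.length_rotate, hlen]
  rw [seedShift, seedShift, applyWord_gam, ← hL, tau_rotate_length_cons, List.rotate_rotate, hL,
    show n - i + (n - 1 - 1) = ψ.length + (n - (i + 1)) by omega, ← List.rotate_rotate,
    List.rotate_length]

/-- applying γ_{n−1} = σ^{n−1}τ to ψ^(i) yields ψ^(i+1),
for every seed ψ and 0 < i < n−1. -/
theorem gamma_shifts_seed (n : ℕ) (hn : 4 ≤ n) (ψ : List ℕ) (hψ : IsSeed n ψ)
    (i : ℕ) (h1 : 0 < i) (h2 : i < n - 1) :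
    applyWord (gam (n - 1)) (seedShift n ψ i) = seedShift n ψ (i + 1) :=
  gamma_shifts_seed_general n ψ hψ i h2
end

section
/- For every integer n ≥ 5 and every non-hub seed ψ, the parent-sequence from ψ to anchor(ψ) has exactly level(ψ) − 1 steps; that is, if ψ_0 = ψ, ψ_{i+1} = parent(ψ_i) and ψ_r = anchor(ψ), then r = level(ψ) − 1. -/
/-!
If `ψ = parent(β)`, the two packages share a permutation; rotating it so that it starts with `n`
forces `ψ = (n, x⊕1, x, L)` and `β = (n, x, L')`, where `L'` is `L` with `x⊕2` inserted somewhere.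
So the decreasing subsequence of `ψ` is that of `β` preceded by `x⊕1`, provided the inserted
`x⊕2 = x⊖(n−3)` does not extend the decreasing run from `x` in `L'`. It could only do so if `L` were
`(x⊖1, …, x⊖(n−4))` and `x⊕2` came last, but then `β` would be a hub seed. Hence the level drops
by exactly one at each parent step outside the hub; hub seeds have level `0`, so the anchor has
level `1` and the parent-sequence has `level(ψ) − 1` steps.
-/

section CyclicSuccessor

variable {n a b : ℕ}

lemma osucc_mem_Icc (ha : a ∈ Set.Icc 1 (n - 1)) : osucc n a ∈ Set.Icc 1 (n - 1) := by
  simp only [Set.mem_Icc, osucc] at *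
  split <;> omega

lemma opred_mem_Icc (ha : a ∈ Set.Icc 1 (n - 1)) : opred n a ∈ Set.Icc 1 (n - 1) := by
  simp only [Set.mem_Icc, opred] at *
  split <;> omega

lemma opred_iterate_mem_Icc (ha : a ∈ Set.Icc 1 (n - 1)) (j : ℕ) :
    (opred n)^[j] a ∈ Set.Icc 1 (n - 1) := by
  induction j with
  | zero => exact ha
  | succ j ih => rw [Function.iterate_succ_apply']; exact opred_mem_Icc ih

lemma opred_osucc (ha : a ∈ Set.Icc 1 (n - 1)) : opred n (osucc n a) = a := by
  simp only [Set.mem_Icc] at ha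
  unfold osucc opred; split <;> split <;> omega

lemma osucc_opred (ha : a ∈ Set.Icc 1 (n - 1)) : osucc n (opred n a) = a := by
  simp only [Set.mem_Icc] at ha
  unfold osucc opred; split <;> split <;> omega

lemma osucc_ne_opred (hn : 4 ≤ n) (ha : a ∈ Set.Icc 1 (n - 1)) : osucc n a ≠ opred n a := by
  simp only [Set.mem_Icc] at ha
  unfold osucc opred; split <;> split <;> omega

lemma natCast_osucc : ((osucc n a : ℕ) : ZMod (n - 1)) = a + 1 := by
  unfold osucc
  split
  · subst a; simp
  · push_cast; rfl

lemma natCast_opred (ha : 1 ≤ a) : ((opred n a : ℕ) : ZMod (n - 1)) = a - 1 := by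
  unfold opred
  split
  · subst a; simp
  · rw [Nat.cast_sub ha, Nat.cast_one]

lemma natCast_opred_iterate (ha : a ∈ Set.Icc 1 (n - 1)) (j : ℕ) :
    (((opred n)^[j] a : ℕ) : ZMod (n - 1)) = a - j := by
  induction j with
  | zero => simp
  | succ j ih =>
    rw [Function.iterate_succ_apply', natCast_opred (opred_iterate_mem_Icc ha j).1, ih]
    push_cast; ring

lemma eq_of_natCast_eq (ha : a ∈ Set.Icc 1 (n - 1)) (hb : b ∈ Set.Icc 1 (n - 1))
    (h : (a : ZMod (n - 1)) = b) : a = b := by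
  obtain ⟨ha1, ha2⟩ := ha
  obtain ⟨hb1, hb2⟩ := hb
  have h' : ((a - 1 : ℕ) : ZMod (n - 1)) = ((b - 1 : ℕ) : ZMod (n - 1)) := by
    rw [Nat.cast_sub ha1, Nat.cast_sub hb1, h]
  rw [ZMod.natCast_eq_natCast_iff', Nat.mod_eq_of_lt (by omega),
    Nat.mod_eq_of_lt (by omega)] at h'
  omega

lemma opred_iterate_inj_of_lt (ha : a ∈ Set.Icc 1 (n - 1)) {i j : ℕ} (hi : i < n - 1) (hj : j < n - 1)
    (h : (opred n)^[i] a = (opred n)^[j] a) : i = j := by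
  have h' := congrArg (fun m : ℕ => (m : ZMod (n - 1))) h
  simp only [natCast_opred_iterate ha, sub_right_inj] at h'
  rwa [ZMod.natCast_eq_natCast_iff', Nat.mod_eq_of_lt hi, Nat.mod_eq_of_lt hj] at h'

lemma osucc_osucc_eq_opred_iterate (hn : 3 ≤ n) (ha : a ∈ Set.Icc 1 (n - 1)) :
    osucc n (osucc n a) = (opred n)^[n - 3] a := by
  apply eq_of_natCast_eq (osucc_mem_Icc (osucc_mem_Icc ha)) (opred_iterate_mem_Icc ha _)
  have hcycle : ((n - 3 : ℕ) : ZMod (n - 1)) + 2 = 0 := by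
    rw [← ZMod.natCast_self (n - 1), show n - 1 = n - 3 + 2 by omega]
    push_cast; rfl
  rw [natCast_osucc, natCast_osucc, natCast_opred_iterate ha, eq_sub_iff_add_eq]
  linear_combination hcycle

end CyclicSuccessor

section DecreasingChain

variable {n : ℕ}

lemma chainLen_le_length (l : List ℕ) (x : ℕ) : chainLen n l x ≤ l.length := by
  induction l generalizing x with
  | nil => simp [chainLen]
  | cons b l ih =>
    simp only [chainLen, List.length_cons]
    split
    · exact Nat.succ_le_succ (ih b)
    · exact (ih x).trans (Nat.le_succ _)

-- Before the scan reaches `y` it has matched at most `min k (chainLen n l x)` entries, so `y` is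
-- only ever compared with some `x ⊖ (j + 1)` for such `j`.
lemma chainLen_insertIdx {y : ℕ} (hy : y ∈ Set.Icc 1 (n - 1)) {l : List ℕ}
    (hl : ∀ b ∈ l, b ∈ Set.Icc 1 (n - 1)) {x k : ℕ}
    (h : ∀ j ≤ min k (chainLen n l x), (opred n)^[j + 1] x ≠ y) :
    chainLen n (l.insertIdx k y) x = chainLen n l x := by
  have hfront : ∀ {l : List ℕ} {x : ℕ}, (opred n)^[0 + 1] x ≠ y →
      chainLen n (l.insertIdx 0 y) x = chainLen n l x := fun {l x} hx => by
    have hx' : x ≠ osucc n y := fun hxy => hx (by simp [hxy, opred_osucc hy])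
    simp [chainLen, hx']
  induction l generalizing x k with
  | nil =>
    cases k with
    | zero => exact hfront (h 0 (Nat.zero_le _))
    | succ k => rfl
  | cons b l ih =>
    have hb := hl b List.mem_cons_self
    have hl' : ∀ c ∈ l, c ∈ Set.Icc 1 (n - 1) := fun c hc => hl c (List.mem_cons_of_mem b hc)
    cases k with
    | zero => exact hfront (h 0 (Nat.zero_le _))
    | succ k =>
      rw [List.insertIdx_succ_cons]
      by_cases hx : x = osucc n b
      · subst hx
        simp only [chainLen, ↓reduceIte] at h ⊢
        rw [ih hl']
        intro j hj
        simpa [Function.iterate_succ_apply, opred_osucc hb] using h (j + 1) (by omega)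
      · simp only [chainLen, if_neg hx] at h ⊢
        exact ih hl' fun j hj => h j (by omega)

def descChain (n x m : ℕ) : List ℕ := (List.range m).map fun j => (opred n)^[j] x

lemma descChain_succ (x m : ℕ) : descChain n x (m + 1) = x :: descChain n (opred n x) m := by
  simp only [descChain, List.range_succ_eq_map, List.map_cons, List.map_map]
  rfl

lemma descChain_concat (x m : ℕ) :
    descChain n x (m + 1) = descChain n x m ++ [(opred n)^[m] x] := by
  simp only [descChain, List.range_succ, List.map_append, List.map_singleton]

lemma chainLen_descChain {x : ℕ} (hx : x ∈ Set.Icc 1 (n - 1)) (m : ℕ) :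
    chainLen n (descChain n (opred n x) m) x = m := by
  induction m generalizing x with
  | zero => simp [descChain, chainLen]
  | succ m ih =>
    rw [descChain_succ, chainLen, if_pos (osucc_opred hx).symm, ih (opred_mem_Icc hx)]

lemma eq_descChain_of_chainLen_eq_length {l : List ℕ} (hl : ∀ b ∈ l, b ∈ Set.Icc 1 (n - 1))
    {x : ℕ} (h : chainLen n l x = l.length) : l = descChain n (opred n x) l.length := by
  induction l generalizing x with
  | nil => rfl
  | cons b l ih =>
    have hb := hl b List.mem_cons_self
    by_cases hx : x = osucc n b
    · subst hx
      rw [chainLen, if_pos rfl, List.length_cons] at h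
      rw [List.length_cons, descChain_succ, opred_osucc hb,
        ← ih (fun c hc => hl c (List.mem_cons_of_mem b hc)) (Nat.add_right_cancel h)]
    · have := chainLen_le_length (n := n) l x
      simp only [chainLen, if_neg hx, List.length_cons] at h
      omega

end DecreasingChain

section Packages

variable {n : ℕ}

lemma IsSeed.exists_eq_cons {ψ : List ℕ} (h : IsSeed n ψ) :
    ∃ a rest, ψ = n :: a :: rest ∧ (n :: osucc n a :: a :: rest).Perm (List.range' 1 n) := by
  obtain ⟨hlen, hhead, hperm⟩ := h
  match ψ, hhead, hperm with
  | [_], _, hperm =>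
    have := hperm.length_eq
    simp only [seedToPerm, List.length_singleton, List.length_range'] at this hlen
    omega
  | _ :: a :: rest, hhead, hperm =>
    obtain rfl : _ = n := by simpa using hhead
    exact ⟨a, rest, rfl, hperm⟩

lemma mem_Icc_of_cons_perm_range' {l : List ℕ} (h : (n :: l).Perm (List.range' 1 n)) {x : ℕ}
    (hx : x ∈ l) : x ∈ Set.Icc 1 (n - 1) := by
  have hx' := List.mem_range'_1.mp (h.subset (List.mem_cons_of_mem n hx))
  have hxn : x ≠ n := by
    rintro rfl
    exact (List.nodup_cons.mp (h.nodup_iff.mpr List.nodup_range')).1 hx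
  simp only [Set.mem_Icc]
  omega

lemma exists_isRotated_of_mem_perms {P π : List ℕ} (h : π ∈ perms n (n :: P)) :
    ∃ a ≤ P.length, π ~r n :: P.insertIdx a (mis n (n :: P)) := by
  obtain ⟨i, j, hi, rfl⟩ := h
  cases i with
  | zero =>
    refine ⟨P.length, le_rfl, ?_⟩
    rw [List.insertIdx_zero, List.insertIdx_length_self]
    exact (List.IsRotated.forall _ j).trans (List.isRotated_concat _ (n :: P)).symm
  | succ i => exact ⟨i, by simpa using hi, List.IsRotated.forall _ j⟩

lemma List.eq_of_cons_isRotated_cons {α : Type*} {x : α} {l l' : List α} (hl : (x :: l).Nodup)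
    (h : (x :: l) ~r (x :: l')) : l = l' := by
  obtain ⟨k, hk⟩ := h
  have hlen : k % (x :: l).length < (x :: l).length := Nat.mod_lt _ (Nat.succ_pos _)
  rw [← List.rotate_mod] at hk
  have hhead := congrArg List.head? hk
  rw [List.head?_rotate hlen, List.head?_cons, ← List.getElem?_cons_zero (l := l),
    List.getElem?_inj hlen hl] at hhead
  rw [hhead, List.rotate_zero] at hk
  exact List.cons_injective hk

lemma List.exists_eq_of_insertIdx_cons_eq_insertIdx_cons {α : Type*} {u v w : α} {R S : List α}
    {a b : ℕ} (huv : u ≠ v) (huw : u ≠ w) (hvw : v ≠ w) (ha : a ≤ R.length + 1)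
    (h : (v :: R).insertIdx a u = (w :: S).insertIdx b v) :
    ∃ L k, k ≤ L.length ∧ R = w :: L ∧ S = L.insertIdx k u := by
  rcases a with _ | _ | a <;> rcases b with _ | b <;> rcases R with _ | ⟨r, L⟩ <;>
    simp_all [List.insertIdx_succ_cons]
  exact ⟨a, ha, h.2.symm⟩

end Packages

section Parent

variable {n : ℕ}

lemma mis_cons_cons (m a : ℕ) (rest : List ℕ) : mis n (m :: a :: rest) = osucc n a := rfl

lemma IsParent.exists_eq (hn : 4 ≤ n) {p c : List ℕ} (h : IsParent n p c) :
    ∃ x L k, k ≤ L.length ∧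
      (n :: osucc n (osucc n x) :: osucc n x :: x :: L).Perm (List.range' 1 n) ∧
      p = n :: osucc n x :: x :: L ∧ c = n :: x :: L.insertIdx k (osucc n (osucc n x)) := by
  obtain ⟨hp, hc, -, ⟨π, hπp, hπc⟩, -, hmis⟩ := h
  obtain ⟨v, R, rfl, hpperm⟩ := hp.exists_eq_cons
  obtain ⟨w, S, rfl, hcperm⟩ := hc.exists_eq_cons
  have hv := mem_Icc_of_cons_perm_range' hpperm (x := v) (by simp)
  have hw := mem_Icc_of_cons_perm_range' hcperm (x := w) (by simp)
  obtain rfl : v = osucc n w := by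
    simpa [mis_cons_cons, opred_osucc hv, opred_osucc (osucc_mem_Icc hw)] using
      congrArg (opred n) hmis
  obtain ⟨a, ha, hπa⟩ := exists_isRotated_of_mem_perms hπp
  obtain ⟨b, -, hπb⟩ := exists_isRotated_of_mem_perms hπc
  have hnodup : (n :: (osucc n w :: R).insertIdx a (osucc n (osucc n w))).Nodup :=
    ((List.perm_insertIdx _ _ ha).cons n).nodup_iff.mpr (hpperm.nodup_iff.mpr List.nodup_range')
  have heq := List.eq_of_cons_isRotated_cons hnodup (hπa.symm.trans hπb)
  have hpd := List.nodup_cons.mp (List.nodup_cons.mp (hpperm.nodup_iff.mpr List.nodup_range')).2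
  have hcd := List.nodup_cons.mp (List.nodup_cons.mp (hcperm.nodup_iff.mpr List.nodup_range')).2
  have huw : osucc n (osucc n w) ≠ w := by
    simpa [opred_osucc hw] using osucc_ne_opred hn (osucc_mem_Icc hw)
  obtain ⟨L, k, hk, rfl, rfl⟩ := List.exists_eq_of_insertIdx_cons_eq_insertIdx_cons
    (List.ne_of_not_mem_cons hpd.1) huw (List.ne_of_not_mem_cons hcd.1)
    (by simpa using ha) heq
  exact ⟨w, L, k, hk, hpperm, rfl, rfl⟩

end Parent

section Level

variable {n : ℕ}

lemma level_cons_cons (m a : ℕ) (rest : List ℕ) :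
    level n (m :: a :: rest) = n - chainLen n rest a - 3 := rfl

lemma level_of_mem_Hub (hn : 3 ≤ n) {ψ : List ℕ} (h : ψ ∈ Hub n) : level n ψ = 0 := by
  obtain ⟨b, hb1, hb2, rfl⟩ := h
  rw [hubSeed, ← descChain, show n - 2 = n - 3 + 1 by omega, descChain_succ, level_cons_cons,
    chainLen_descChain ⟨hb1, hb2⟩]
  omega

lemma cons_cons_concat_mem_Hub {x : ℕ} (hx : x ∈ Set.Icc 1 (n - 1)) {L : List ℕ}
    (hL : ∀ b ∈ L, b ∈ Set.Icc 1 (n - 1)) (hlen : L.length + 4 = n)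
    (hfull : chainLen n L x = L.length) : n :: x :: (L ++ [(opred n)^[n - 3] x]) ∈ Hub n := by
  refine ⟨x, hx.1, hx.2, ?_⟩
  rw [hubSeed, ← descChain, show n - 2 = L.length + 1 + 1 by omega, descChain_succ,
    descChain_concat, ← eq_descChain_of_chainLen_eq_length hL hfull,
    ← Function.iterate_succ_apply, show n - 3 = L.length + 1 by omega]

lemma level_eq_level_add_one_of_isParent (hn : 4 ≤ n) {p c : List ℕ} (h : IsParent n p c)
    (hc : c ∉ Hub n) : level n c = level n p + 1 := by
  obtain ⟨x, L, k, hk, hperm, rfl, rfl⟩ := h.exists_eq hn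
  have hlen : L.length + 4 = n := by simpa using hperm.length_eq
  have hx := mem_Icc_of_cons_perm_range' hperm (x := x) (by simp)
  have hy := mem_Icc_of_cons_perm_range' hperm (x := osucc n (osucc n x)) (by simp)
  have hL : ∀ b ∈ L, b ∈ Set.Icc 1 (n - 1) :=
    fun b hb => mem_Icc_of_cons_perm_range' hperm (by simp [hb])
  have hyx := osucc_osucc_eq_opred_iterate (by omega) hx
  have hchain := chainLen_le_length (n := n) L x
  have hinsert : chainLen n (L.insertIdx k (osucc n (osucc n x))) x = chainLen n L x := by
    by_cases hfull : k = L.length ∧ chainLen n L x = L.length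
    · refine absurd ?_ hc
      rw [hfull.1, List.insertIdx_length_self, hyx]
      exact cons_cons_concat_mem_Hub hx hL hlen hfull.2
    · refine chainLen_insertIdx hy hL fun j hj hjy => ?_
      have := opred_iterate_inj_of_lt hx (by omega) (by omega) (hjy.trans hyx)
      omega
  rw [level_cons_cons, level_cons_cons, hinsert, chainLen, if_pos rfl]
  omega

end Level

theorem parent_sequence_length_general (n : ℕ) (hn : 5 ≤ n) (ψ : List ℕ)
    (r : ℕ) (seq : ℕ → List ℕ) (h0 : seq 0 = ψ)
    (hstep : ∀ i < r, IsParent n (seq (i + 1)) (seq i))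
    (hnonhub : ∀ i ≤ r, seq i ∉ Hub n)
    (hanchor : ∃ φ, φ ∈ Hub n ∧ IsParent n φ (seq r)) :
    r = level n ψ - 1 := by
  have hdescent : ∀ i ≤ r, level n ψ = level n (seq i) + i := by
    intro i hi
    induction i with
    | zero => rw [h0, add_zero]
    | succ i ih =>
      rw [ih (by omega), level_eq_level_add_one_of_isParent (by omega) (hstep i (by omega))
        (hnonhub i (by omega))]
      ring
  obtain ⟨φ, hφ, hφr⟩ := hanchor
  have hlevel_anchor : level n (seq r) = 1 := by
    rw [level_eq_level_add_one_of_isParent (by omega) hφr (hnonhub r le_rfl),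
      level_of_mem_Hub (by omega) hφ]
  have := hdescent r le_rfl
  omega

/-- the parent-sequence from a non-hub seed ψ to anchor(ψ) has
exactly level(ψ) − 1 steps. -/
theorem parent_sequence_length (n : ℕ) (hn : 5 ≤ n) (ψ : List ℕ) (hψ : IsSeed n ψ)
    (hnh : ψ ∉ Hub n) (r : ℕ) (seq : ℕ → List ℕ) (h0 : seq 0 = ψ)
    (hstep : ∀ i < r, IsParent n (seq (i + 1)) (seq i))
    (hnonhub : ∀ i ≤ r, seq i ∉ Hub n)
    (hanchor : ∃ φ, φ ∈ Hub n ∧ IsParent n φ (seq r)) :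
    r = level n ψ - 1 :=
  parent_sequence_length_general n hn ψ r seq h0 hstep hnonhub hanchor
end
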